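/- Let p be an odd prime, r ≥ 1 an integer, 0 ≤ m < p and n ∈ ℤ. Then for every integer x: binom(x − m − np − 1, p^{r+1} − 1) ≡ binom(x − m − 1, p − 1) · binom(⌊x/p⌋ − n − 1, p^r − 1) (mod p), where ⌊x/p⌋ denotes the floor of x/p (integer division rounding toward −∞). (Via the separating characters χ_x of Dist(T_{r+1}), this expresses the factorization μ_{m+np}^{(r+1)} = μ_m · Fr′(μ_n^{(r)}), where Fr′ is the splitting of the Frobenius on the distribution algebra of the torus determined by binom(H, k) ↦ binom(H, pk), and hence that φ(μ_n^{(r)}) = μ_{np}^{(r+1)}.) -/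

import Mathlib

/-! Modulo `p`, `binom(z, p^s - 1)` is the indicator of `p^s ∣ z + 1`. Indeed, for `k < p^s`
Vandermonde gives `binom(z + p^s, k) ≡ binom(z, k)`, since `p` divides `binom(p^s, j)` for
`0 < j < p^s`; so `z` may be reduced to `0 ≤ z < p^s`, where the claim is clear. Both sides of the
congruence thus become indicators of the same divisibility condition. -/

/-- The generalized (falling-factorial) binomial coefficient
`binom(y, k) = y(y−1)⋯(y−k+1)/k! ∈ ℤ` for `y ∈ ℤ`, `k ∈ ℕ`
(the division is exact, so integer division gives the correct value). -/
def ibinom (y : ℤ) (k : ℕ) : ℤ :=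
  (∏ j ∈ Finset.range k, (y - (j : ℤ))) / (k.factorial : ℤ)

lemma ibinom_eq_choose (y : ℤ) (k : ℕ) : ibinom y k = Ring.choose y k := by
  rw [ibinom, ← descPochhammer_eval_eq_prod_range, Polynomial.eval_eq_smeval,
    Ring.descPochhammer_eq_factorial_smul_choose, nsmul_eq_mul]
  exact Int.mul_ediv_cancel_left _ (mod_cast k.factorial_ne_zero)

lemma periodic_choose_cast_zmod {p : ℕ} (hp : p.Prime) (s : ℕ) {k : ℕ} (hk : k < p ^ s) :
    Function.Periodic (fun z : ℤ => ((Ring.choose z k : ℤ) : ZMod p)) ((p : ℤ) ^ s) := by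
  intro z
  simp only
  rw [Ring.add_choose_eq k (Commute.all _ _), Int.cast_sum,
    Finset.sum_eq_single_of_mem (k, 0) (by simp)]
  · simp
  rintro ⟨i, j⟩ hij hne
  rw [Finset.HasAntidiagonal.mem_antidiagonal] at hij
  have hj : j ≠ 0 := by rintro rfl; simp_all
  rw [← Nat.cast_pow, Ring.choose_natCast, Int.cast_mul, Int.cast_natCast,
    (ZMod.natCast_eq_zero_iff _ _).2 (hp.dvd_choose_pow hj (by omega)), mul_zero]

lemma choose_prime_pow_sub_one_cast_zmod {p : ℕ} (hp : p.Prime) (s : ℕ) (z : ℤ) :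
    ((Ring.choose z (p ^ s - 1) : ℤ) : ZMod p) = if (p : ℤ) ^ s ∣ z + 1 then 1 else 0 := by
  have hps : 0 < p ^ s := pow_pos hp.pos s
  have hperiodic := periodic_choose_cast_zmod hp s (k := p ^ s - 1) (by omega)
  set q : ℤ := (p : ℤ) ^ s
  have hq : q = (p ^ s : ℕ) := by push_cast; rfl
  obtain ⟨N, hN⟩ : ∃ N : ℕ, (N : ℤ) = z % q := ⟨(z % q).toNat, Int.toNat_of_nonneg
    (Int.emod_nonneg _ (by omega))⟩
  have hNlt : N < p ^ s := by have := Int.emod_lt_of_pos z (show 0 < q by omega); omega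
  have hchoose : ((Ring.choose z (p ^ s - 1) : ℤ) : ZMod p) = (N.choose (p ^ s - 1) : ZMod p) := by
    rw [← hperiodic.sub_int_mul_eq (x := z) (z / q), Int.cast_id, show z - z / q * q = N by
      rw [hN, Int.emod_def, mul_comm], Ring.choose_natCast, Int.cast_natCast]
  have hdvd : q ∣ z + 1 ↔ p ^ s ∣ N + 1 := by
    rw [show z + 1 = ((N + 1 : ℕ) : ℤ) + q * (z / q) by push_cast; rw [hN, Int.emod_def]; ring,
      dvd_add_left (dvd_mul_right _ _), hq, Int.natCast_dvd_natCast]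
  rw [hchoose, if_congr hdvd rfl rfl]
  rcases (show N + 1 ≤ p ^ s by omega).eq_or_lt with hN1 | hN1
  · rw [show N = p ^ s - 1 by omega, Nat.choose_self, if_pos (hN1 ▸ dvd_rfl), Nat.cast_one]
  · rw [Nat.choose_eq_zero_of_lt (by omega), if_neg fun h => absurd (Nat.le_of_dvd (by omega) h)
      (by omega), Nat.cast_zero]

lemma pow_succ_dvd_sub_mul_iff {p : ℕ} (hp : 0 < p) (r : ℕ) {m : ℕ} (hm : m < p) (n x : ℤ) :
    (p : ℤ) ^ (r + 1) ∣ x - m - n * p ↔ (p : ℤ) ∣ x - m ∧ (p : ℤ) ^ r ∣ x.fdiv p - n := by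
  have hp' : (0 : ℤ) < p := mod_cast hp
  have hfactor : (p : ℤ) ∣ x - m → x - m - n * p = p * (x.fdiv p - n) := by
    rintro ⟨c, hc⟩
    have hfdiv : x.fdiv p = c := by
      rw [Int.fdiv_eq_ediv_of_nonneg _ hp'.le, show x = m + c * p by linarith,
        Int.add_mul_ediv_right _ _ hp'.ne', Int.ediv_eq_zero_of_lt (by positivity) (mod_cast hm),
        zero_add]
    rw [hfdiv, hc]
    ring
  constructor
  · intro h
    have hp_dvd : (p : ℤ) ∣ x - m := by
      simpa using dvd_add ((dvd_pow_self (p : ℤ) r.succ_ne_zero).trans h) (dvd_mul_left _ n)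
    rw [hfactor hp_dvd, pow_succ', mul_dvd_mul_iff_left hp'.ne'] at h
    exact ⟨hp_dvd, h⟩
  · rintro ⟨hp_dvd, hpow_dvd⟩
    rw [hfactor hp_dvd, pow_succ']
    exact mul_dvd_mul_left _ hpow_dvd

theorem stmt17_general (p : ℕ) (hp : p.Prime) (r : ℕ)
    (m : ℕ) (hm : m < p) (n x : ℤ) :
    ((ibinom (x - m - n * p - 1) (p ^ (r + 1) - 1) : ZMod p)) =
      ((ibinom (x - m - 1) (p - 1) : ZMod p)) *
        ((ibinom (Int.fdiv x p - n - 1) (p ^ r - 1) : ZMod p)) := by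
  rw [show p - 1 = p ^ 1 - 1 by rw [pow_one]]
  simp only [ibinom_eq_choose, choose_prime_pow_sub_one_cast_zmod hp]
  simp only [sub_add_cancel, pow_one, pow_succ_dvd_sub_mul_iff hp.pos r hm, ite_and]
  split_ifs <;> simp

theorem stmt17 (p : ℕ) (hp : p.Prime) (hodd : Odd p) (r : ℕ) (hr : 1 ≤ r)
    (m : ℕ) (hm : m < p) (n x : ℤ) :
    ((ibinom (x - m - n * p - 1) (p ^ (r + 1) - 1) : ZMod p)) =
      ((ibinom (x - m - 1) (p - 1) : ZMod p)) *
        ((ibinom (Int.fdiv x p - n - 1) (p ^ r - 1) : ZMod p)) :=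
  stmt17_general p hp r m hm n x
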